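/- Let v ∈ C° be generic, let σ ∈ Σ^max, write v = ∑_{i∈σ} s_i v_i (so that all s_i ≠ 0), let γ ∈ ℤ^r, and let γ_i ∈ [0,1) for i ∈ σ be the unique numbers with γ − ∑_{i∈σ} γ_i v_i ∈ ∑_{i∈σ} ℤ v_i. Then there is exactly one pair (c,d) of points of ℤ^r such that c + d = v_σ, c + γ ∈ ∑_{i∈σ} ℤ v_i, and for all sufficiently small ε > 0 both c + εv and d − εv lie in the interior of σ; it is given by c = ∑_{i∈σ, γ_i ≠ 0} (1 − γ_i) v_i + ∑_{i∈σ, γ_i = 0, s_i < 0} v_i and d = ∑_{i∈σ, γ_i ≠ 0} γ_i v_i + ∑_{i∈σ, γ_i = 0, s_i > 0} v_i. -/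

import Mathlib

/-!
In the basis `(v_i)_{i ∈ σ}` every condition splits into one condition per coordinate. If `t_i`
are the coordinates of `c`, those of `d = v_σ - c` are `1 - t_i` and those of `v` are `s_i`, so the
cone conditions say `t_i ∈ [0, 1]`, where `t_i = 0` is allowed only if `s_i > 0` and `t_i = 1` only
if `s_i < 0`, while the lattice condition says `t_i + γ_i ∈ ℤ`. Since `γ_i ∈ [0, 1)` and
`s_i ≠ 0` (`v` is generic and `σ` has only `r` rays), this pins down `t_i`; and the resulting `c`
is a lattice point because `γ` is.
-/

open scoped BigOperators Classical

noncomputable section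

namespace BBGKZ

/-- The real vector corresponding to the `i`-th integer vector `v i`. -/
def vR {r n : ℕ} (v : Fin n → Fin r → ℤ) (i : Fin n) : Fin r → ℝ := fun j => (v i j : ℝ)

/-- The complex vector corresponding to the `i`-th integer vector `v i`. -/
def vC {r n : ℕ} (v : Fin n → Fin r → ℤ) (i : Fin n) : Fin r → ℂ := fun j => (v i j : ℂ)

/-- The real vector corresponding to an integer vector. -/
def intVec {r : ℕ} (c : Fin r → ℤ) : Fin r → ℝ := fun j => (c j : ℝ)

/-- The complex vector corresponding to an integer vector. -/
def intVecC {r : ℕ} (c : Fin r → ℤ) : Fin r → ℂ := fun j => (c j : ℂ)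

/-- The cone `C = ∑ ℝ_{≥0} v_i`. -/
def coneC {r n : ℕ} (v : Fin n → Fin r → ℤ) : Set (Fin r → ℝ) :=
  {x | ∃ t : Fin n → ℝ, (∀ i, 0 ≤ t i) ∧ x = ∑ i, t i • vR v i}

/-- The cone `σ_I = ∑_{i ∈ I} ℝ_{≥0} v_i`. -/
def sigmaCone {r n : ℕ} (v : Fin n → Fin r → ℤ) (I : Finset (Fin n)) : Set (Fin r → ℝ) :=
  {x | ∃ t : Fin n → ℝ, (∀ i, 0 ≤ t i) ∧ (∀ i, i ∉ I → t i = 0) ∧ x = ∑ i, t i • vR v i}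

/-- `v_I = ∑_{i ∈ I} v_i`. -/
def vSum {r n : ℕ} (v : Fin n → Fin r → ℤ) (I : Finset (Fin n)) : Fin r → ℤ := ∑ i ∈ I, v i

/-- `Vol_I`: the absolute value of the determinant of the `r × r` matrix whose rows are the
vectors `v i`, `i ∈ I` (defined when `I.card = r`, and `0` otherwise). -/
def Vol {r n : ℕ} (v : Fin n → Fin r → ℤ) (I : Finset (Fin n)) : ℝ :=
  if h : I.card = r then
    |(Matrix.of fun a b : Fin r => vR v (I.orderIsoOfFin h a).1 b).det| else 0

/-- A vector of `ℝ^r` is generic if it lies in no proper linear subspace spanned by integer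
vectors. -/
def GenericVec {r : ℕ} (w : Fin r → ℝ) : Prop :=
  ∀ T : Set (Fin r → ℤ), Submodule.span ℝ (intVec '' T) ≠ ⊤ → w ∉ Submodule.span ℝ (intVec '' T)

/-- The value at `β ∈ ℂ^r` of the `ℂ`-linear extension of `μ : ℝ^r → ℝ`. -/
def muC {r : ℕ} (μ : (Fin r → ℝ) →ₗ[ℝ] ℝ) (β : Fin r → ℂ) : ℂ :=
  ∑ j, β j * (μ (Pi.single j 1) : ℂ)

/-- A solution of `bbGKZ(S, 0)` on `U`, where `S` is `C` or `C°`. -/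
def IsSol0 {r n : ℕ} (v : Fin n → Fin r → ℤ) (S : Set (Fin r → ℝ))
    (U : Set (Fin n → ℂ)) (Φ : (Fin r → ℤ) → (Fin n → ℂ) → ℂ) : Prop :=
  (∀ c : Fin r → ℤ, intVec c ∈ S → DifferentiableOn ℂ (Φ c) U) ∧
  (∀ c : Fin r → ℤ, intVec c ∈ S → ∀ i : Fin n, ∀ x ∈ U,
      fderiv ℂ (Φ c) x (Pi.single i 1) = Φ (c + v i) x) ∧
  (∀ c : Fin r → ℤ, intVec c ∈ S → ∀ μ : (Fin r → ℝ) →ₗ[ℝ] ℝ, ∀ x ∈ U,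
      (∑ i, (μ (vR v i) : ℂ) * x i * fderiv ℂ (Φ c) x (Pi.single i 1))
        + (μ (intVec c) : ℂ) * Φ c x = 0)

/-- A solution of `bbGKZ(S, β)` on `U`. -/
def IsSolBeta {r n : ℕ} (v : Fin n → Fin r → ℤ) (S : Set (Fin r → ℝ)) (β : Fin r → ℂ)
    (U : Set (Fin n → ℂ)) (Φ : (Fin r → ℤ) → (Fin n → ℂ) → ℂ) : Prop :=
  (∀ c : Fin r → ℤ, intVec c ∈ S → DifferentiableOn ℂ (Φ c) U) ∧
  (∀ c : Fin r → ℤ, intVec c ∈ S → ∀ i : Fin n, ∀ x ∈ U,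
      fderiv ℂ (Φ c) x (Pi.single i 1) = Φ (c + v i) x) ∧
  (∀ c : Fin r → ℤ, intVec c ∈ S → ∀ μ : (Fin r → ℝ) →ₗ[ℝ] ℝ, ∀ x ∈ U,
      (∑ i, (μ (vR v i) : ℂ) * x i * fderiv ℂ (Φ c) x (Pi.single i 1))
        + ((μ (intVec c) : ℂ) - muC μ β) * Φ c x = 0)

/-- The coefficients `ξ_{c,d,I}` determined by a generic vector `v0 ∈ C°`:
`ξ_{c,d,I} = (-1)^{deg c}` if `σ_I` is `r`-dimensional and for all sufficiently small `ε > 0`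
both `c + ε v0` and `d - ε v0` lie in the interior of `σ_I`, and `0` otherwise. -/
def xiCoef {r n : ℕ} (v : Fin n → Fin r → ℤ) (degZ : (Fin r → ℤ) → ℤ) (v0 : Fin r → ℝ)
    (c d : Fin r → ℤ) (I : Finset (Fin n)) : ℂ :=
  if intVec c ∈ coneC v ∧ intVec d ∈ interior (coneC v) ∧ c + d = vSum v I ∧ I.card = r ∧
      Submodule.span ℝ (vR v '' (I : Set (Fin n))) = ⊤ ∧
      (∀ᶠ ε in nhdsWithin (0 : ℝ) (Set.Ioi 0),
        intVec c + ε • v0 ∈ interior (sigmaCone v I) ∧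
        intVec d - ε • v0 ∈ interior (sigmaCone v I))
  then (-1 : ℂ) ^ (degZ c) else 0

/-- The pairing `⟨Φ, Ψ⟩ = ∑_{c,d,I} ξ_{c,d,I} Vol_I (∏_{i∈I} x_i) Φ_c Ψ_d`, where the
(finitely supported) inner sum is over lattice points `c ∈ C`, `d ∈ C°` with `c + d = v_I`. -/
def pairingXi {r n : ℕ} (v : Fin n → Fin r → ℤ)
    (ξ : (Fin r → ℤ) → (Fin r → ℤ) → Finset (Fin n) → ℂ)
    (Φ Ψ : (Fin r → ℤ) → (Fin n → ℂ) → ℂ) (x : Fin n → ℂ) : ℂ :=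
  ∑ I ∈ Finset.powersetCard r (Finset.univ : Finset (Fin n)),
    ∑ᶠ c : Fin r → ℤ,
      (if intVec c ∈ coneC v ∧ intVec (vSum v I - c) ∈ interior (coneC v) then
        ξ c (vSum v I - c) I * (Vol v I : ℂ) * (∏ i ∈ I, x i) * Φ c x * Ψ (vSum v I - c) x
      else 0)

/-- A finite simplicial fan supported on `C` with rays among the `v_i`, encoded by the finite
family of index sets of its cones. -/
structure IsFan {r n : ℕ} (v : Fin n → Fin r → ℤ) (Fam : Finset (Finset (Fin n))) : Prop where
  indep : ∀ I ∈ Fam, LinearIndependent ℝ (fun i : {x : Fin n // x ∈ I} => vR v i.1)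
  downward : ∀ I ∈ Fam, ∀ J : Finset (Fin n), J ⊆ I → J ∈ Fam
  inter : ∀ I ∈ Fam, ∀ J ∈ Fam, ∃ K ∈ Fam, K ⊆ I ∧ K ⊆ J ∧
    sigmaCone v I ∩ sigmaCone v J = sigmaCone v K
  max_cones : ∀ I ∈ Fam, ∃ J ∈ Fam, I ⊆ J ∧ J.card = r
  union_eq : (⋃ I ∈ (Fam : Set (Finset (Fin n))), sigmaCone v I) = coneC v

/-- `ψ` is strictly `Σ`-convex. -/
def StrictSigmaConvex {r n : ℕ} (v : Fin n → Fin r → ℤ) (Fam : Finset (Finset (Fin n)))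
    (ψ : (Fin r → ℝ) → ℝ) : Prop :=
  ∀ I ∈ Fam, I.card = r → ∃ ℓ : (Fin r → ℝ) →ₗ[ℝ] ℝ,
    (∀ x ∈ sigmaCone v I, ψ x = ℓ x) ∧ (∀ x ∈ coneC v, x ∉ sigmaCone v I → ℓ x < ψ x)

/-- The minimal cone of the fan containing a given point. -/
def IsMinConeOf {r n : ℕ} (v : Fin n → Fin r → ℤ) (Fam : Finset (Finset (Fin n)))
    (K : Finset (Fin n)) (w : Fin r → ℝ) : Prop :=
  K ∈ Fam ∧ w ∈ sigmaCone v K ∧ ∀ K' ∈ Fam, w ∈ sigmaCone v K' → K ⊆ K'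

/-- The cone `C_Σ` of the secondary fan corresponding to `Σ`. -/
def CSigma {r n : ℕ} (v : Fin n → Fin r → ℤ) (Fam : Finset (Finset (Fin n))) :
    Set (Fin n → ℝ) :=
  {η | ∀ I ∈ Fam, I.card = r → ∀ ℓ : (Fin r → ℝ) →ₗ[ℝ] ℝ,
    (∀ i ∈ I, ℓ (vR v i) = η i) → ∀ j, ℓ (vR v j) ≤ η j}

/-- The index set `L_{c,γ,σ;β}` of the Γ-series. -/
def Lset {r n : ℕ} (v : Fin n → Fin r → ℤ) (I0 : Finset (Fin n)) (β : Fin r → ℂ)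
    (c γ : Fin r → ℤ) : Set (Fin n → ℂ) :=
  {l | (∑ i, l i • vC v i) = β - intVecC c
    ∧ (∀ i ∉ I0, ∃ m : ℤ, l i = (m : ℂ))
    ∧ (∃ m : Fin n → ℤ,
        intVecC c + ∑ i ∈ I0ᶜ, l i • vC v i = -intVecC γ + ∑ i ∈ I0, (m i : ℂ) • vC v i)}

/-- An individual term `∏_i exp(l_i Log x_i)/Γ(1 + l_i)` of the Γ-series.  (Mathlib's
`Complex.Gamma` vanishes at the poles of `Γ`, so `1/Γ` is `0` there.) -/
def gammaTerm {n : ℕ} (l x : Fin n → ℂ) : ℂ :=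
  ∏ i, Complex.exp (l i * Complex.log (x i)) / Complex.Gamma (1 + l i)

/-- The region `R(ψ̂)`. -/
def Rregion {r n : ℕ} (v : Fin n → Fin r → ℤ) (Fam : Finset (Finset (Fin n)))
    (ψh : Fin n → ℝ) : Set (Fin n → ℂ) :=
  {x | (∀ i, x i ≠ 0 ∧ |Complex.arg (x i)| < Real.pi) ∧
    (fun i => -Real.log ‖x i‖ - ψh i) ∈ CSigma v Fam}

/-- The Γ-series `Φ^{γ,σ}_c` with parameter `β`. -/
def GammaSeries {r n : ℕ} (v : Fin n → Fin r → ℤ) (I0 : Finset (Fin n)) (β : Fin r → ℂ)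
    (γ c : Fin r → ℤ) (x : Fin n → ℂ) : ℂ :=
  ∑' l : (Lset v I0 β c γ), gammaTerm (l : Fin n → ℂ) x

/-- Absolute and uniform-on-compacts convergence of the Γ-series on a set `S`:
for every compact `K ⊆ S`, `∑_{l ∈ L} sup_{x ∈ K} |term_l(x)| < ∞`. -/
def ConvergesOn {r n : ℕ} (v : Fin n → Fin r → ℤ) (I0 : Finset (Fin n)) (β : Fin r → ℂ)
    (γ c : Fin r → ℤ) (S : Set (Fin n → ℂ)) : Prop :=
  ∀ K ⊆ S, IsCompact K →
    Summable (fun l : (Lset v I0 β c γ) =>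
      sSup ((fun x => ‖gammaTerm (l : Fin n → ℂ) x‖) '' K))

/-- `β ∈ ℂ^r` is generic: it lies in no proper affine subspace of `ℂ^r` defined over `ℚ`. -/
def GenericBeta {r : ℕ} (β : Fin r → ℂ) : Prop :=
  ∀ q : Fin r → ℚ, q ≠ 0 → ∀ q0 : ℚ, (∑ j, (q j : ℂ) * β j) ≠ (q0 : ℂ)

end BBGKZ

open Filter Topology Module

lemma eventually_pos_add_mul_iff {t w : ℝ} :
    (∀ᶠ ε in 𝓝[>] (0 : ℝ), 0 < t + ε * w) ↔ 0 < t ∨ (t = 0 ∧ 0 < w) := by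
  have hlim : Tendsto (fun ε : ℝ => t + ε * w) (𝓝[>] 0) (𝓝 t) := by
    have h : Continuous fun ε : ℝ => t + ε * w := by fun_prop
    simpa using (h.tendsto 0).mono_left nhdsWithin_le_nhds
  constructor
  · intro h
    rcases lt_trichotomy t 0 with ht | rfl | ht
    · obtain ⟨ε, h1, h2⟩ := (h.and (hlim.eventually (eventually_lt_nhds ht))).exists
      linarith
    · obtain ⟨ε, h1, h2⟩ := (h.and self_mem_nhdsWithin).exists
      rw [zero_add] at h1
      exact Or.inr ⟨rfl, pos_of_mul_pos_right h1 (le_of_lt h2)⟩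
    · exact Or.inl ht
  · rintro (ht | ⟨rfl, hw⟩)
    · exact hlim.eventually (eventually_gt_nhds ht)
    · filter_upwards [self_mem_nhdsWithin] with ε hε
      simpa using mul_pos hε hw

namespace Module.Basis

variable {ι E : Type*} [Fintype ι] [NormedAddCommGroup E] [NormedSpace ℝ E]

lemma interior_setOf_repr_nonneg (b : Basis ι ℝ E) :
    interior {x | ∀ a, 0 ≤ b.repr x a} = {x | ∀ a, 0 < b.repr x a} := by
  have h : {x | ∀ a, 0 ≤ b.repr x a} =
      b.equivFunL.toHomeomorph ⁻¹' Set.univ.pi fun _ => Set.Ici 0 := by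
    ext; simp [Pi.le_def]
  rw [h, ← Homeomorph.preimage_interior, interior_pi_set Set.finite_univ]
  ext
  simp

lemma eventually_add_smul_mem_interior_iff (b : Basis ι ℝ E) (x y : E) :
    (∀ᶠ ε in 𝓝[>] (0 : ℝ), x + ε • y ∈ interior {z | ∀ a, 0 ≤ b.repr z a}) ↔
      ∀ a, 0 < b.repr x a ∨ (b.repr x a = 0 ∧ 0 < b.repr y a) := by
  simp only [b.interior_setOf_repr_nonneg, Set.mem_ofPred, map_add, map_smul,
    Finsupp.add_apply, Finsupp.smul_apply, smul_eq_mul, eventually_all,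
    eventually_pos_add_mul_iff]

lemma repr_finset_sum_smul {R M κ : Type*} [Semiring R] [AddCommMonoid M] [Module R M]
    {s : Finset κ} (b : Basis s R M) {w : κ → M} (hb : ∀ i, b i = w i) (f : κ → R) (i : s) :
    b.repr (∑ j ∈ s, f j • w j) i = f i := by
  rw [← Finset.sum_coe_sort s]
  simp only [← hb, b.repr_sum_self]

lemma exists_int_sum_smul_iff {M κ : Type*} [AddCommGroup M] [Module ℝ M] {s : Finset κ}
    (b : Basis s ℝ M) {w : κ → M} (hb : ∀ i, b i = w i) (y : M) :
    (∃ m : κ → ℤ, y = ∑ i ∈ s, (m i : ℝ) • w i) ↔ ∀ a, ∃ k : ℤ, b.repr y a = k := by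
  constructor
  · rintro ⟨m, rfl⟩ a
    exact ⟨m a, b.repr_finset_sum_smul hb _ a⟩
  · intro h
    choose k hk using h
    refine ⟨fun i => if h : i ∈ s then k ⟨i, h⟩ else 0, b.ext_elem fun a => ?_⟩
    rw [b.repr_finset_sum_smul hb, hk]
    simp [a.2]

end Module.Basis

namespace BBGKZ

/-- The coordinate of `c` along `v_i`: the representative of `-g` modulo `1` in `[0, 1]`, where
the tie at `g = 0` is broken by the sign `s` of the coordinate of `v`. -/
def cornerCoeff (g s : ℝ) : ℝ := if g ≠ 0 then 1 - g else if s < 0 then 1 else 0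

lemma exists_int_cornerCoeff_add (g s : ℝ) : ∃ k : ℤ, cornerCoeff g s + g = k := by
  unfold cornerCoeff
  split_ifs with hg
  · exact ⟨1, by push_cast; ring⟩
  · exact ⟨1, by push Not at hg; simp [hg]⟩
  · exact ⟨0, by push Not at hg; simp [hg]⟩

lemma cornerCoeff_conditions_iff {g s t : ℝ} (hg0 : 0 ≤ g) (hg1 : g < 1) (hs : s ≠ 0) :
    ((∃ k : ℤ, t + g = k) ∧ (0 < t ∨ t = 0 ∧ 0 < s) ∧ (0 < 1 - t ∨ 1 - t = 0 ∧ 0 < -s)) ↔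
      t = cornerCoeff g s := by
  constructor
  · rintro ⟨⟨k, hk⟩, ht, hu⟩
    have ht0 : 0 ≤ t := by rcases ht with h | ⟨h, _⟩ <;> linarith
    have ht1 : t ≤ 1 := by rcases hu with h | ⟨h, _⟩ <;> linarith
    have hk01 : k = 0 ∨ k = 1 := by
      have h0 : 0 ≤ k := by exact_mod_cast (by linarith : (0 : ℝ) ≤ k)
      have h2 : k < 2 := by exact_mod_cast (by linarith : (k : ℝ) < 2)
      omega
    unfold cornerCoeff
    rcases eq_or_lt_of_le hg0 with rfl | hg
    · rw [if_neg (not_not.2 rfl)]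
      rcases hk01 with rfl | rfl <;> push_cast at hk <;> split_ifs <;>
        rcases ht with h | ⟨h, h'⟩ <;> rcases hu with u | ⟨u, u'⟩ <;> linarith
    · rw [if_pos hg.ne']
      rcases hk01 with rfl | rfl <;> push_cast at hk <;> linarith
  · rintro rfl
    refine ⟨exists_int_cornerCoeff_add g s, ?_⟩
    unfold cornerCoeff
    split_ifs with hg hs'
    · have := lt_of_le_of_ne hg0 (Ne.symm hg)
      exact ⟨Or.inl (by linarith), Or.inl (by linarith)⟩
    · exact ⟨Or.inl one_pos, Or.inr ⟨sub_self 1, by linarith⟩⟩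
    · exact ⟨Or.inr ⟨rfl, lt_of_le_of_ne (not_lt.1 hs') hs.symm⟩, Or.inl (by norm_num)⟩

section CornerSums

variable {ι M : Type*} [AddCommGroup M] [Module ℝ M] (I : Finset ι) (g s : ι → ℝ) (w : ι → M)

lemma sum_filter_add_sum_filter_eq_sum_cornerCoeff :
    (∑ i ∈ I.filter (fun i => g i ≠ 0), (1 - g i) • w i)
        + (∑ i ∈ I.filter (fun i => g i = 0 ∧ s i < 0), w i) =
      ∑ i ∈ I, cornerCoeff (g i) (s i) • w i := by
  rw [Finset.sum_filter, Finset.sum_filter, ← Finset.sum_add_distrib]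
  refine Finset.sum_congr rfl fun i _ => ?_
  unfold cornerCoeff
  split_ifs <;> simp_all

lemma sum_filter_add_sum_filter_eq_sum_one_sub_cornerCoeff (hs : ∀ i ∈ I, s i ≠ 0) :
    (∑ i ∈ I.filter (fun i => g i ≠ 0), g i • w i)
        + (∑ i ∈ I.filter (fun i => g i = 0 ∧ 0 < s i), w i) =
      ∑ i ∈ I, (1 - cornerCoeff (g i) (s i)) • w i := by
  rw [Finset.sum_filter, Finset.sum_filter, ← Finset.sum_add_distrib]
  refine Finset.sum_congr rfl fun i hi => ?_
  unfold cornerCoeff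
  rcases (hs i hi).lt_or_gt with h | h <;> split_ifs <;> simp_all [not_lt_of_gt]

end CornerSums

variable {r n : ℕ}

lemma intVec_add (c d : Fin r → ℤ) : intVec (c + d) = intVec c + intVec d := by
  funext j; simp [intVec]

lemma intVec_sub (c d : Fin r → ℤ) : intVec (c - d) = intVec c - intVec d := by
  funext j; simp [intVec]

lemma intVec_injective : Function.Injective (intVec (r := r)) :=
  fun _ _ h => funext fun j => Int.cast_injective (α := ℝ) (congrFun h j)

lemma intVec_sum_zsmul (v : Fin n → Fin r → ℤ) (I : Finset (Fin n)) (z : Fin n → ℤ) :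
    intVec (∑ i ∈ I, z i • v i) = ∑ i ∈ I, (z i : ℝ) • vR v i := by
  funext j; simp [intVec, vR, Finset.sum_apply]

lemma intVec_vSum (v : Fin n → Fin r → ℤ) (I : Finset (Fin n)) :
    intVec (vSum v I) = ∑ i ∈ I, vR v i := by
  funext j; simp [intVec, vSum, vR, Finset.sum_apply]

lemma GenericVec.coeff_ne_zero {v : Fin n → Fin r → ℤ} {w : Fin r → ℝ} (hw : GenericVec w)
    {I : Finset (Fin n)} (hI : I.card ≤ r) {s : Fin n → ℝ} (hs : w = ∑ i ∈ I, s i • vR v i)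
    {i : Fin n} (hi : i ∈ I) : s i ≠ 0 := by
  intro hsi
  have hspan : Submodule.span ℝ (intVec '' (v '' ↑(I.erase i))) =
      Submodule.span ℝ ↑((I.erase i).image (vR v)) := by
    rw [Set.image_image, Finset.coe_image]; rfl
  refine hw (v '' ↑(I.erase i)) ?_ ?_
  · rw [hspan]
    intro htop
    have hrank := finrank_span_finset_le_card (R := ℝ) ((I.erase i).image (vR v))
    rw [Set.finrank, htop, finrank_top, Module.finrank_fin_fun] at hrank
    have hcard := Finset.card_image_le (s := I.erase i) (f := vR v)
    rw [Finset.card_erase_of_mem hi] at hcard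
    have := Finset.card_pos.2 ⟨i, hi⟩
    omega
  · rw [hspan, hs, ← Finset.add_sum_erase I _ hi, hsi, zero_smul, zero_add]
    exact Submodule.sum_mem _ fun j hj => Submodule.smul_mem _ _
      (Submodule.subset_span (Finset.mem_coe.2 (Finset.mem_image_of_mem _ hj)))

section Simplicial

variable {v : Fin n → Fin r → ℤ} {I : Finset (Fin n)} (b : Basis I ℝ (Fin r → ℝ))

lemma sigmaCone_eq_setOf_repr_nonneg (hb : ∀ i, b i = vR v i) :
    sigmaCone v I = {x | ∀ a, 0 ≤ b.repr x a} := by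
  ext x
  constructor
  · rintro ⟨t, ht0, htI, rfl⟩ a
    rw [← Finset.sum_subset (Finset.subset_univ I) fun i _ hi => by rw [htI i hi, zero_smul],
      b.repr_finset_sum_smul hb]
    exact ht0 a
  · intro hx
    refine ⟨fun i => if h : i ∈ I then b.repr x ⟨i, h⟩ else 0, fun i => ?_, fun i hi => dif_neg hi,
      b.ext_elem fun a => ?_⟩
    · dsimp only
      split_ifs
      exacts [hx _, le_rfl]
    · rw [← Finset.sum_subset (Finset.subset_univ I) fun i _ hi => by simp [hi],
        b.repr_finset_sum_smul hb]
      simp [a.2]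

theorem pair_conditions_iff (hb : ∀ i, b i = vR v i) {s : Fin n → ℝ} {v0 : Fin r → ℝ}
    (hs : v0 = ∑ i ∈ I, s i • vR v i) (hs0 : ∀ i ∈ I, s i ≠ 0) {γ : Fin r → ℤ}
    {γc : Fin n → ℝ} (hγc : ∀ i ∈ I, 0 ≤ γc i ∧ γc i < 1) {m0 : Fin n → ℤ}
    (hγ : intVec γ = ∑ i ∈ I, (γc i + m0 i) • vR v i) {c d : Fin r → ℤ}
    (hcd : c + d = vSum v I) :
    ((∃ m : Fin n → ℤ, intVec (c + γ) = ∑ i ∈ I, (m i : ℝ) • vR v i) ∧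
      ∀ᶠ ε in 𝓝[>] (0 : ℝ), intVec c + ε • v0 ∈ interior (sigmaCone v I) ∧
        intVec d - ε • v0 ∈ interior (sigmaCone v I)) ↔
      intVec c = ∑ i ∈ I, cornerCoeff (γc i) (s i) • vR v i := by
  set t := b.repr (intVec c) with ht
  have hrepr := b.repr_finset_sum_smul hb
  have hlat : (∃ m : Fin n → ℤ, intVec (c + γ) = ∑ i ∈ I, (m i : ℝ) • vR v i) ↔
      ∀ a, ∃ k : ℤ, t a + γc a = k := by
    rw [b.exists_int_sum_smul_iff hb]
    refine forall_congr' fun a => ?_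
    rw [intVec_add, map_add, Finsupp.add_apply, hγ, hrepr]
    constructor <;> rintro ⟨k, hk⟩
    · exact ⟨k - m0 a, by push_cast; linarith⟩
    · exact ⟨k + m0 a, by push_cast; linarith⟩
  have hd : ∀ a, b.repr (intVec d) a = 1 - t a := by
    intro a
    have hvSum : intVec (vSum v I) = ∑ i ∈ I, (1 : ℝ) • vR v i := by
      simp only [intVec_vSum, one_smul]
    rw [show intVec d = intVec (vSum v I) - intVec c by rw [← hcd, intVec_add]; abel,
      map_sub, Finsupp.sub_apply, hvSum, hrepr]
  have hev : (∀ᶠ ε in 𝓝[>] (0 : ℝ), intVec c + ε • v0 ∈ interior (sigmaCone v I) ∧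
        intVec d - ε • v0 ∈ interior (sigmaCone v I)) ↔
      ∀ a, (0 < t a ∨ t a = 0 ∧ 0 < s a) ∧ (0 < 1 - t a ∨ 1 - t a = 0 ∧ 0 < -s a) := by
    simp_rw [sub_eq_add_neg (intVec d), ← smul_neg, eventually_and,
      sigmaCone_eq_setOf_repr_nonneg b hb, b.eventually_add_smul_mem_interior_iff, hs, map_neg,
      Finsupp.neg_apply, hrepr, hd, ← ht, forall_and]
  rw [hlat, hev, ← forall_and, b.ext_elem_iff]
  refine forall_congr' fun a => ?_
  rw [hrepr]
  exact cornerCoeff_conditions_iff (hγc a a.2).1 (hγc a a.2).2 (hs0 a a.2)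

end Simplicial

lemma exists_intVec_eq_sum_cornerCoeff {v : Fin n → Fin r → ℤ} {I : Finset (Fin n)}
    {γ : Fin r → ℤ} {γc : Fin n → ℝ} {m0 : Fin n → ℤ}
    (hγ : intVec γ = ∑ i ∈ I, (γc i + m0 i) • vR v i) (s : Fin n → ℝ) :
    ∃ c : Fin r → ℤ, intVec c = ∑ i ∈ I, cornerCoeff (γc i) (s i) • vR v i := by
  choose k hk using fun i => exists_int_cornerCoeff_add (γc i) (s i)
  refine ⟨∑ i ∈ I, (k i + m0 i) • v i - γ, ?_⟩
  rw [intVec_sub, intVec_sum_zsmul, hγ, ← Finset.sum_sub_distrib]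
  refine Finset.sum_congr rfl fun i _ => ?_
  rw [← sub_smul]
  congr 1
  push_cast
  linarith [hk i]

theorem statement13_general
    (r n : ℕ)
    (v : Fin n → Fin r → ℤ)
    (v0 : Fin r → ℝ) (hv0gen : GenericVec v0)
    (Fam : Finset (Finset (Fin n))) (hFam : IsFan v Fam)
    (I0 : Finset (Fin n)) (hI0F : I0 ∈ Fam) (hI0card : I0.card = r)
    (s : Fin n → ℝ) (hs : v0 = ∑ i ∈ I0, s i • vR v i)
    (γ : Fin r → ℤ)
    (γc : Fin n → ℝ) (hγc : ∀ i ∈ I0, 0 ≤ γc i ∧ γc i < 1)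
    (hγlat : ∃ m : Fin n → ℤ,
      intVec γ - ∑ i ∈ I0, γc i • vR v i = ∑ i ∈ I0, (m i : ℝ) • vR v i) :
    (∃! p : (Fin r → ℤ) × (Fin r → ℤ),
        p.1 + p.2 = vSum v I0 ∧
        (∃ m : Fin n → ℤ, intVec (p.1 + γ) = ∑ i ∈ I0, (m i : ℝ) • vR v i) ∧
        (∀ᶠ ε in nhdsWithin (0 : ℝ) (Set.Ioi 0),
          intVec p.1 + ε • v0 ∈ interior (sigmaCone v I0) ∧
          intVec p.2 - ε • v0 ∈ interior (sigmaCone v I0))) ∧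
    (∀ p : (Fin r → ℤ) × (Fin r → ℤ),
        (p.1 + p.2 = vSum v I0 ∧
         (∃ m : Fin n → ℤ, intVec (p.1 + γ) = ∑ i ∈ I0, (m i : ℝ) • vR v i) ∧
         (∀ᶠ ε in nhdsWithin (0 : ℝ) (Set.Ioi 0),
           intVec p.1 + ε • v0 ∈ interior (sigmaCone v I0) ∧
           intVec p.2 - ε • v0 ∈ interior (sigmaCone v I0))) →
        intVec p.1 = (∑ i ∈ I0.filter (fun i => γc i ≠ 0), (1 - γc i) • vR v i)
            + (∑ i ∈ I0.filter (fun i => γc i = 0 ∧ s i < 0), vR v i) ∧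
        intVec p.2 = (∑ i ∈ I0.filter (fun i => γc i ≠ 0), γc i • vR v i)
            + (∑ i ∈ I0.filter (fun i => γc i = 0 ∧ 0 < s i), vR v i)) := by
  obtain ⟨b, hb⟩ : ∃ b : Basis I0 ℝ (Fin r → ℝ), ∀ i, b i = vR v i :=
    ⟨basisOfLinearIndependentOfCardEqFinrank' _ (hFam.indep I0 hI0F) (by simp [hI0card]),
      by simp⟩
  have hs0 : ∀ i ∈ I0, s i ≠ 0 := fun i hi => hv0gen.coeff_ne_zero hI0card.le hs hi
  obtain ⟨m0, hm0⟩ := hγlat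
  have hγ : intVec γ = ∑ i ∈ I0, (γc i + m0 i) • vR v i := by
    simp only [add_smul, Finset.sum_add_distrib, ← hm0]
    abel
  have hchar : ∀ c d : Fin r → ℤ, (c + d = vSum v I0 ∧
      (∃ m : Fin n → ℤ, intVec (c + γ) = ∑ i ∈ I0, (m i : ℝ) • vR v i) ∧
      ∀ᶠ ε in nhdsWithin (0 : ℝ) (Set.Ioi 0), intVec c + ε • v0 ∈ interior (sigmaCone v I0) ∧
        intVec d - ε • v0 ∈ interior (sigmaCone v I0)) ↔
      c + d = vSum v I0 ∧ intVec c = ∑ i ∈ I0, cornerCoeff (γc i) (s i) • vR v i :=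
    fun c d => and_congr_right fun hcd => pair_conditions_iff b hb hs hs0 hγc hγ hcd
  obtain ⟨c0, hc0⟩ := exists_intVec_eq_sum_cornerCoeff hγ s
  refine ⟨⟨(c0, vSum v I0 - c0), (hchar _ _).2 ⟨add_sub_cancel _ _, hc0⟩, fun p hp => ?_⟩,
    fun p hp => ?_⟩ <;> obtain ⟨hcd, hc⟩ := (hchar p.1 p.2).1 hp
  · have h1 : p.1 = c0 := intVec_injective (hc.trans hc0.symm)
    exact Prod.ext h1 (by rw [← hcd, h1, add_sub_cancel_left])
  · rw [sum_filter_add_sum_filter_eq_sum_cornerCoeff,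
      sum_filter_add_sum_filter_eq_sum_one_sub_cornerCoeff _ _ _ _ hs0, eq_sub_of_add_eq' hcd,
      intVec_sub, intVec_vSum, hc]
    simp only [sub_smul, one_smul, Finset.sum_sub_distrib, and_self]

theorem statement13
    (r n : ℕ) (hr : 1 ≤ r) (hn : r ≤ n)
    (deg : (Fin r → ℝ) →ₗ[ℝ] ℝ)
    (hdegInt : ∀ m : Fin r → ℤ, ∃ k : ℤ, deg (intVec m) = (k : ℝ))
    (v : Fin n → Fin r → ℤ)
    (hv_inj : Function.Injective v)
    (hv_span : Submodule.span ℝ (Set.range (vR v)) = ⊤)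
    (hv_deg : ∀ i, deg (vR v i) = 1)
    (v0 : Fin r → ℝ) (hv0mem : v0 ∈ interior (coneC v)) (hv0gen : GenericVec v0)
    (Fam : Finset (Finset (Fin n))) (hFam : IsFan v Fam)
    (I0 : Finset (Fin n)) (hI0F : I0 ∈ Fam) (hI0card : I0.card = r)
    (s : Fin n → ℝ) (hs : v0 = ∑ i ∈ I0, s i • vR v i)
    (γ : Fin r → ℤ)
    (γc : Fin n → ℝ) (hγc : ∀ i ∈ I0, 0 ≤ γc i ∧ γc i < 1)
    (hγlat : ∃ m : Fin n → ℤ,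
      intVec γ - ∑ i ∈ I0, γc i • vR v i = ∑ i ∈ I0, (m i : ℝ) • vR v i) :
    (∃! p : (Fin r → ℤ) × (Fin r → ℤ),
        p.1 + p.2 = vSum v I0 ∧
        (∃ m : Fin n → ℤ, intVec (p.1 + γ) = ∑ i ∈ I0, (m i : ℝ) • vR v i) ∧
        (∀ᶠ ε in nhdsWithin (0 : ℝ) (Set.Ioi 0),
          intVec p.1 + ε • v0 ∈ interior (sigmaCone v I0) ∧
          intVec p.2 - ε • v0 ∈ interior (sigmaCone v I0))) ∧
    (∀ p : (Fin r → ℤ) × (Fin r → ℤ),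
        (p.1 + p.2 = vSum v I0 ∧
         (∃ m : Fin n → ℤ, intVec (p.1 + γ) = ∑ i ∈ I0, (m i : ℝ) • vR v i) ∧
         (∀ᶠ ε in nhdsWithin (0 : ℝ) (Set.Ioi 0),
           intVec p.1 + ε • v0 ∈ interior (sigmaCone v I0) ∧
           intVec p.2 - ε • v0 ∈ interior (sigmaCone v I0))) →
        intVec p.1 = (∑ i ∈ I0.filter (fun i => γc i ≠ 0), (1 - γc i) • vR v i)
            + (∑ i ∈ I0.filter (fun i => γc i = 0 ∧ s i < 0), vR v i) ∧
        intVec p.2 = (∑ i ∈ I0.filter (fun i => γc i ≠ 0), γc i • vR v i)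
            + (∑ i ∈ I0.filter (fun i => γc i = 0 ∧ 0 < s i), vR v i)) :=
  statement13_general r n v v0 hv0gen Fam hFam I0 hI0F hI0card s hs γ γc hγc hγlat

end BBGKZ
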